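/- arXiv:1801.10020 — 6 statements merged into one kernel-verified Lean document; each statement's English description precedes it below -/
import Mathlib

section
/- Let A, X be n×n complex matrices with X = X*, and let B be n×m₁ and C be m₂×n complex matrices. If X satisfies the Riccati equation X C* C X - i(A X - X A*) + B B* = 0, then setting Ã = A + i B B* X⁻¹ (assuming X invertible), θ₁ = B, θ₂ = -i X C*, and Λ₀ = [θ₁ θ₂] (the n×(m₁+m₂) block matrix), one has the identity Ã X - X Ã* = i Λ₀ j Λ₀*, where j = diag(I_{m₁}, -I_{m₂}). -/
open Matrix

/-!
Replacing `A` by `Ã = A + i B B* X⁻¹` adds `2i B B*` to `A X - X A*`, while the Riccati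
equation says `A X - X A* = -i (X C* C X + B B*)`. Hence `Ã X - X Ã* = i (B B* - X C* C X)`,
and the right-hand side is the `j`-signature form `Λ₀ j Λ₀* = θ₁ θ₁* - θ₂ θ₂*`.
-/

namespace Matrix

theorem fromCols_mul_fromBlocks_one_neg_one_mul_conjTranspose {m n₁ n₂ R : Type*}
    [Fintype n₁] [Fintype n₂] [DecidableEq n₁] [DecidableEq n₂] [Ring R] [StarRing R]
    (A₁ : Matrix m n₁ R) (A₂ : Matrix m n₂ R) :
    fromCols A₁ A₂ * (fromBlocks 1 0 0 (-1) : Matrix (n₁ ⊕ n₂) (n₁ ⊕ n₂) R) * (fromCols A₁ A₂)ᴴ =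
      A₁ * A₁ᴴ - A₂ * A₂ᴴ := by
  rw [conjTranspose_fromCols_eq_fromRows_conjTranspose, fromCols_mul_fromBlocks,
    fromCols_mul_fromRows]
  simp [sub_eq_add_neg]

theorem add_smul_mul_inv_mul_sub_mul_conjTranspose {n R : Type*} [Fintype n] [DecidableEq n]
    [CommRing R] [StarRing R] {X K : Matrix n n R} (hX : X.IsHermitian) (hXinv : IsUnit X)
    (hK : K.IsHermitian) (A : Matrix n n R) (c : R) :
    (A + c • (K * X⁻¹)) * X - X * (A + c • (K * X⁻¹))ᴴ = A * X - X * Aᴴ + (c - star c) • K := by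
  have hdet : IsUnit X.det := (isUnit_iff_isUnit_det X).mp hXinv
  simp only [conjTranspose_add, conjTranspose_smul, conjTranspose_mul, conjTranspose_nonsing_inv,
    hX.eq, hK.eq, add_mul, mul_add, Matrix.smul_mul, Matrix.mul_smul, Matrix.mul_assoc,
    nonsing_inv_mul X hdet, ← Matrix.mul_assoc X, mul_nonsing_inv X hdet, Matrix.mul_one,
    Matrix.one_mul]
  module

theorem neg_I_smul_mul_conjTranspose {m n : Type*} [Fintype n] (M : Matrix m n ℂ) :
    (-Complex.I • M) * (-Complex.I • M)ᴴ = M * Mᴴ := by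
  simp [smul_mul, smul_smul, Complex.conj_I]

end Matrix

/-- If `X = X*` is invertible and satisfies the Riccati equation
`X C* C X - i (A X - X A*) + B B* = 0`, then with `Ã = A + i B B* X⁻¹`, `θ₁ = B`,
`θ₂ = -i X C*`, `Λ₀ = [θ₁ θ₂]` and `j = diag(I, -I)`, one has
`Ã X - X Ã* = i Λ₀ j Λ₀*`. -/
theorem riccati_to_lyapunov_identity {n m₁ m₂ : ℕ}
    (A X : Matrix (Fin n) (Fin n) ℂ)
    (B : Matrix (Fin n) (Fin m₁) ℂ) (C : Matrix (Fin m₂) (Fin n) ℂ)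
    (hX : Xᴴ = X) (hXinv : IsUnit X)
    (hRic : X * Cᴴ * C * X - Complex.I • (A * X - X * Aᴴ) + B * Bᴴ = 0)
    (Atil : Matrix (Fin n) (Fin n) ℂ) (hAtil : Atil = A + Complex.I • (B * Bᴴ * X⁻¹))
    (θ₁ : Matrix (Fin n) (Fin m₁) ℂ) (hθ₁ : θ₁ = B)
    (θ₂ : Matrix (Fin n) (Fin m₂) ℂ) (hθ₂ : θ₂ = -Complex.I • (X * Cᴴ))
    (Λ₀ : Matrix (Fin n) (Fin m₁ ⊕ Fin m₂) ℂ) (hΛ₀ : Λ₀ = fromCols θ₁ θ₂)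
    (j : Matrix (Fin m₁ ⊕ Fin m₂) (Fin m₁ ⊕ Fin m₂) ℂ)
    (hj : j = fromBlocks 1 0 0 (-1)) :
    Atil * X - X * Atilᴴ = Complex.I • (Λ₀ * j * Λ₀ᴴ) := by
  rw [hAtil, hΛ₀, hθ₁, hθ₂, hj]
  have hXCCX : X * Cᴴ * (X * Cᴴ)ᴴ = X * Cᴴ * C * X := by
    rw [conjTranspose_mul, conjTranspose_conjTranspose, hX, Matrix.mul_assoc _ C]
  rw [add_smul_mul_inv_mul_sub_mul_conjTranspose hX hXinv (isHermitian_mul_conjTranspose_self B),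
    fromCols_mul_fromBlocks_one_neg_one_mul_conjTranspose, neg_I_smul_mul_conjTranspose, hXCCX,
    Complex.star_def, Complex.conj_I]
  linear_combination (norm := match_scalars <;> ring_nf <;> simp [Complex.I_sq]) Complex.I • hRic
end

section
/- Let A be an n×n complex matrix, θ₁ an n×m₁ matrix, θ₂ an n×m₂ matrix, and define Λ(x) = [e^{-ixA} θ₁, e^{ixA} θ₂] and S(x) = S(0) + ∫₀ˣ Λ(t) Λ(t)* dt for x ≥ 0, where S(0) is self-adjoint. If A S(0) - S(0) A* = i Λ(0) j Λ(0)* with j = diag(I_{m₁}, -I_{m₂}), then A S(x) - S(x) A* = i Λ(x) j Λ(x)* for all x ≥ 0. -/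
/-!
Differentiating `Λ` gives `Λ' = -i A Λ j`. Since `j* = j` and `j² = 1`, the derivative of
`i Λ j Λ*` is then `A Λ Λ* - Λ Λ* A*`, which is also the derivative of `A S - S A*` because
`S' = Λ Λ*`. Hence `A S - S A* - i Λ j Λ*` is constant, and it vanishes at `x = 0`.
-/

open Matrix MeasureTheory intervalIntegral NormedSpace

attribute [local instance] Matrix.frobeniusNormedAddCommGroup Matrix.frobeniusNormedSpace
attribute [local instance] Matrix.frobeniusNormedRing Matrix.frobeniusNormedAlgebra

variable {ι κ μ : Type*} [Fintype ι] [Fintype κ] [Fintype μ]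

section Calculus

variable {𝕜 : Type*} [RCLike 𝕜]

theorem HasDerivAt.matrix_mul {f : ℝ → Matrix ι κ 𝕜} {g : ℝ → Matrix κ μ 𝕜}
    {f' : Matrix ι κ 𝕜} {g' : Matrix κ μ 𝕜} {x : ℝ}
    (hf : HasDerivAt f f' x) (hg : HasDerivAt g g' x) :
    HasDerivAt (fun t => f t * g t) (f' * g x + f x * g') x := by
  rw [add_comm]
  exact ((mulLinearMap ℝ).toContinuousBilinearMap).hasDerivAt_of_bilinear
    (fun _ => hf) (fun _ => hg)

theorem HasDerivAt.matrix_conjTranspose {f : ℝ → Matrix ι κ 𝕜} {f' : Matrix ι κ 𝕜} {x : ℝ}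
    (hf : HasDerivAt f f' x) : HasDerivAt (fun t => (f t)ᴴ) f'ᴴ x :=
  let L : Matrix ι κ 𝕜 →ₗ[ℝ] Matrix κ ι 𝕜 :=
    { toFun := conjTranspose
      map_add' := conjTranspose_add
      map_smul' := fun c M => by simp [conjTranspose_smul] }
  L.toContinuousLinearMap.hasFDerivAt.comp_hasDerivAt x hf

theorem HasDerivAt.matrix_fromCols {f : ℝ → Matrix ι κ 𝕜} {g : ℝ → Matrix ι μ 𝕜}
    {f' : Matrix ι κ 𝕜} {g' : Matrix ι μ 𝕜} {x : ℝ}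
    (hf : HasDerivAt f f' x) (hg : HasDerivAt g g' x) :
    HasDerivAt (fun t => fromCols (f t) (g t)) (fromCols f' g') x :=
  -- not found by instance search
  have : FiniteDimensional ℝ (Matrix ι κ 𝕜 × Matrix ι μ 𝕜) := Module.Finite.prod
  let L : Matrix ι κ 𝕜 × Matrix ι μ 𝕜 →ₗ[ℝ] Matrix ι (κ ⊕ μ) 𝕜 :=
    { toFun := fun p => fromCols p.1 p.2
      map_add' := fun p q => by ext i (k | k) <;> rfl
      map_smul' := fun c p => by ext i (k | k) <;> rfl }
  L.toContinuousLinearMap.hasFDerivAt.comp_hasDerivAt x (hf.prodMk hg)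

end Calculus

theorem hasDerivAt_smul_mul_mul_conjTranspose [DecidableEq κ] {A : Matrix ι ι ℂ}
    {Λ : ℝ → Matrix ι κ ℂ} {j : Matrix κ κ ℂ} (hj : jᴴ = j) (hjj : j * j = 1) {x : ℝ}
    (hΛ : HasDerivAt Λ (-Complex.I • (A * Λ x * j)) x) :
    HasDerivAt (fun t => Complex.I • (Λ t * j * (Λ t)ᴴ))
      (A * (Λ x * (Λ x)ᴴ) - Λ x * (Λ x)ᴴ * Aᴴ) x := by
  refine (((hΛ.matrix_mul (hasDerivAt_const x j)).matrix_mul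
    hΛ.matrix_conjTranspose).const_smul Complex.I).congr_deriv ?_
  have hjj' : ∀ M : Matrix κ ι ℂ, j * (j * M) = M := fun M => by
    rw [← Matrix.mul_assoc, hjj, Matrix.one_mul]
  simp [conjTranspose_smul, hj, Matrix.mul_assoc, hjj, hjj', smul_smul, sub_eq_add_neg]

theorem lyapunov_identity_of_hasDerivAt [DecidableEq κ] {A : Matrix ι ι ℂ}
    {Λ : ℝ → Matrix ι κ ℂ} {S : ℝ → Matrix ι ι ℂ} {j : Matrix κ κ ℂ} (hj : jᴴ = j)
    (hjj : j * j = 1) (hΛ : ∀ t, HasDerivAt Λ (-Complex.I • (A * Λ t * j)) t)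
    (hS : ∀ t, HasDerivAt S (Λ t * (Λ t)ᴴ) t)
    (h0 : A * S 0 - S 0 * Aᴴ = Complex.I • (Λ 0 * j * (Λ 0)ᴴ)) (x : ℝ) :
    A * S x - S x * Aᴴ = Complex.I • (Λ x * j * (Λ x)ᴴ) := by
  have hdefect : ∀ t, HasDerivAt
      (fun t => A * S t - S t * Aᴴ - Complex.I • (Λ t * j * (Λ t)ᴴ)) 0 t := fun t =>
    ((((hasDerivAt_const t A).matrix_mul (hS t)).sub
      ((hS t).matrix_mul (hasDerivAt_const t Aᴴ))).sub
      (hasDerivAt_smul_mul_mul_conjTranspose hj hjj (hΛ t))).congr_deriv (by simp)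
  have := is_const_of_deriv_eq_zero (fun t => (hdefect t).differentiableAt)
    (fun t => (hdefect t).deriv) x 0
  rwa [h0, sub_self, sub_eq_zero] at this

theorem hasDerivAt_exp_smul_mul [DecidableEq ι] (A : Matrix ι ι ℂ) (θ : Matrix ι κ ℂ) (c : ℂ)
    (x : ℝ) :
    HasDerivAt (fun t : ℝ => exp ((c * t) • A) * θ) (c • (A * (exp ((c * x) • A) * θ))) x := by
  have hlin : HasDerivAt (fun t : ℝ => c * t) c x := by
    simpa using (hasDerivAt_id x).ofReal_comp.const_mul c
  have hexp := (hasDerivAt_exp_smul_const' (𝕂 := ℂ) A (c * x)).scomp x hlin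
  refine (hexp.matrix_mul (hasDerivAt_const x θ)).congr_deriv ?_
  rw [Matrix.mul_zero, add_zero, Matrix.smul_mul, Matrix.mul_assoc]
  -- the two scalar actions (Frobenius normed algebra, entrywise) agree only up to unfolding
  rfl

theorem hasDerivAt_fromCols_exp [DecidableEq ι] [DecidableEq κ] [DecidableEq μ]
    {A : Matrix ι ι ℂ} {θ₁ : Matrix ι κ ℂ} {θ₂ : Matrix ι μ ℂ} {Λ : ℝ → Matrix ι (κ ⊕ μ) ℂ}
    (hΛ : ∀ t : ℝ, Λ t = fromCols (exp ((-(Complex.I * t)) • A) * θ₁)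
      (exp ((Complex.I * t) • A) * θ₂)) (x : ℝ) :
    HasDerivAt Λ (-Complex.I • (A * Λ x * (fromBlocks 1 0 0 (-1) : Matrix (κ ⊕ μ) (κ ⊕ μ) ℂ)))
      x := by
  have h₁ := hasDerivAt_exp_smul_mul A θ₁ (-Complex.I) x
  simp only [neg_mul] at h₁
  obtain rfl : Λ = _ := funext hΛ
  refine (h₁.matrix_fromCols (hasDerivAt_exp_smul_mul A θ₂ Complex.I x)).congr_deriv ?_
  ext i (k | k) <;> simp [fromCols_mul_fromBlocks]

theorem lyapunov_identity_propagates_general {n m₁ m₂ : ℕ}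
    (A : Matrix (Fin n) (Fin n) ℂ)
    (θ₁ : Matrix (Fin n) (Fin m₁) ℂ) (θ₂ : Matrix (Fin n) (Fin m₂) ℂ)
    (Λ : ℝ → Matrix (Fin n) (Fin m₁ ⊕ Fin m₂) ℂ)
    (hΛ : ∀ x : ℝ, Λ x = fromCols
      (exp ((-(Complex.I * (x : ℂ))) • A) * θ₁)
      (exp ((Complex.I * (x : ℂ)) • A) * θ₂))
    (S₀ : Matrix (Fin n) (Fin n) ℂ)
    (S : ℝ → Matrix (Fin n) (Fin n) ℂ)
    (hS : ∀ x : ℝ, S x = S₀ + ∫ t in (0:ℝ)..x, Λ t * (Λ t)ᴴ)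
    (j : Matrix (Fin m₁ ⊕ Fin m₂) (Fin m₁ ⊕ Fin m₂) ℂ)
    (hj : j = fromBlocks 1 0 0 (-1))
    (h0 : A * S₀ - S₀ * Aᴴ = Complex.I • (Λ 0 * j * (Λ 0)ᴴ)) :
    ∀ x : ℝ, 0 ≤ x → A * S x - S x * Aᴴ = Complex.I • (Λ x * j * (Λ x)ᴴ) := by
  have hj_herm : jᴴ = j := by simp [hj, fromBlocks_conjTranspose]
  have hj_inv : j * j = 1 := by simp [hj, fromBlocks_multiply]
  have hΛ' : ∀ t, HasDerivAt Λ (-Complex.I • (A * Λ t * j)) t := fun t =>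
    hj ▸ hasDerivAt_fromCols_exp hΛ t
  have hgram : Continuous fun t => Λ t * (Λ t)ᴴ :=
    continuous_iff_continuousAt.2 fun t =>
      ((hΛ' t).matrix_mul (hΛ' t).matrix_conjTranspose).continuousAt
  have hS' : ∀ t, HasDerivAt S (Λ t * (Λ t)ᴴ) t := fun t => by
    rw [funext hS]
    exact (hgram.integral_hasStrictDerivAt 0 t).hasDerivAt.const_add S₀
  have hS0 : S 0 = S₀ := by simp [hS]
  exact fun x _ => lyapunov_identity_of_hasDerivAt hj_herm hj_inv hΛ' hS' (hS0 ▸ h0) x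

/-- With `Λ(x) = [e^{-ixA} θ₁, e^{ixA} θ₂]` and
`S(x) = S(0) + ∫₀ˣ Λ(t) Λ(t)* dt`, `S(0) = S(0)*`, if
`A S(0) - S(0) A* = i Λ(0) j Λ(0)*` then `A S(x) - S(x) A* = i Λ(x) j Λ(x)*` for all `x ≥ 0`. -/
theorem lyapunov_identity_propagates {n m₁ m₂ : ℕ}
    (A : Matrix (Fin n) (Fin n) ℂ)
    (θ₁ : Matrix (Fin n) (Fin m₁) ℂ) (θ₂ : Matrix (Fin n) (Fin m₂) ℂ)
    (Λ : ℝ → Matrix (Fin n) (Fin m₁ ⊕ Fin m₂) ℂ)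
    (hΛ : ∀ x : ℝ, Λ x = fromCols
      (exp ((-(Complex.I * (x : ℂ))) • A) * θ₁)
      (exp ((Complex.I * (x : ℂ)) • A) * θ₂))
    (S₀ : Matrix (Fin n) (Fin n) ℂ) (hS₀ : S₀ᴴ = S₀)
    (S : ℝ → Matrix (Fin n) (Fin n) ℂ)
    (hS : ∀ x : ℝ, S x = S₀ + ∫ t in (0:ℝ)..x, Λ t * (Λ t)ᴴ)
    (j : Matrix (Fin m₁ ⊕ Fin m₂) (Fin m₁ ⊕ Fin m₂) ℂ)
    (hj : j = fromBlocks 1 0 0 (-1))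
    (h0 : A * S₀ - S₀ * Aᴴ = Complex.I • (Λ 0 * j * (Λ 0)ᴴ)) :
    ∀ x : ℝ, 0 ≤ x → A * S x - S x * Aᴴ = Complex.I • (Λ x * j * (Λ x)ᴴ) :=
  lyapunov_identity_propagates_general A θ₁ θ₂ Λ hΛ S₀ S hS j hj h0
end

section
/- Let S : [0,∞) → n×n complex matrices be differentiable with S(x) positive definite for all x, and define R(x) = e^{-ixA} S(x) e^{ixA*} for an n×n matrix A. If A S(x) - S(x) A* = i Λ(x) j Λ(x)* and S'(x) = Λ(x) Λ(x)*, where Λ(x) = [e^{-ixA}θ₁, e^{ixA}θ₂] and j = diag(I_{m₁}, -I_{m₂}), then R'(x) = e^{-ixA}(Λ(x) j Λ(x)* + Λ(x) Λ(x)*) e^{ixA*} = 2 e^{-ixA}(e^{-ixA}θ₁)(e^{-ixA}θ₁)* e^{ixA*} ≥ 0, i.e., R is monotonically nondecreasing in the Loewner order. -/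
open Matrix NormedSpace
open scoped ComplexOrder

/-!
Differentiating `R = e^{-ixA} S e^{ixA*}` by the product rule gives
`e^{-ixA} (-iA S + S' + i S A*) e^{ixA*}`, and the identity `A S - S A* = i Λ j Λ*` turns
`-iA S + i S A*` into `Λ j Λ*`. In `Λ j Λ* + Λ Λ*` the `θ₂`-blocks cancel and the `θ₁`-blocks
double, so the derivative is `2 (e^{-ixA} e^{-ixA} θ₁)(e^{-ixA} e^{-ixA} θ₁)*`, a Gram matrix.
-/

attribute [local instance] Matrix.frobeniusNormedRing Matrix.frobeniusNormedAlgebra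

theorem hasDerivAt_exp_smul_mul_mul_exp_smul {𝕂 𝔸 : Type*} [RCLike 𝕂] [NormedRing 𝔸]
    [NormedAlgebra 𝕂 𝔸] [CompleteSpace 𝔸] {S : 𝕂 → 𝔸} {S' : 𝔸} {x : 𝕂} (hS : HasDerivAt S S' x)
    (b c : 𝔸) :
    HasDerivAt (fun t => exp (t • b) * S t * exp (t • c))
      (exp (x • b) * (b * S x + S' + S x * c) * exp (x • c)) x := by
  refine (((hasDerivAt_exp_smul_const b x).mul hS).mul
    (hasDerivAt_exp_smul_const' c x)).congr_deriv ?_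
  rw [Pi.mul_apply]
  noncomm_ring

theorem neg_I_smul_mul_add_mul_I_smul {𝔸 : Type*} [Ring 𝔸] [Algebra ℂ 𝔸] {a b s m : 𝔸}
    (h : a * s - s * b = Complex.I • m) :
    (-Complex.I • a) * s + s * (Complex.I • b) = m := by
  calc (-Complex.I • a) * s + s * (Complex.I • b) = -Complex.I • (a * s - s * b) := by
        rw [smul_mul_assoc, mul_smul_comm, smul_sub]; module
    _ = m := by rw [h, smul_smul, neg_mul, Complex.I_mul_I, neg_neg, one_smul]

theorem fromCols_mul_signature_mul_conjTranspose_add_self_mul_conjTranspose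
    {R m n₁ n₂ : Type*} [Ring R] [StarRing R] [Fintype n₁] [Fintype n₂] [DecidableEq n₁]
    [DecidableEq n₂] (P : Matrix m n₁ R) (Q : Matrix m n₂ R) :
    fromCols P Q * (fromBlocks 1 0 0 (-1) : Matrix (n₁ ⊕ n₂) (n₁ ⊕ n₂) R) * (fromCols P Q)ᴴ
      + fromCols P Q * (fromCols P Q)ᴴ = (2 : R) • (P * Pᴴ) := by
  rw [conjTranspose_fromCols_eq_fromRows_conjTranspose, fromCols_mul_fromBlocks,
    fromCols_mul_fromRows, fromCols_mul_fromRows]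
  simp only [Matrix.mul_one, Matrix.mul_zero, Matrix.mul_neg, add_zero, zero_add, Matrix.neg_mul,
    two_smul]
  abel

theorem conjTranspose_exp_neg_I_mul_smul {n : Type*} [Fintype n] [DecidableEq n]
    (A : Matrix n n ℂ) (t : ℝ) :
    (exp ((-(Complex.I * (t : ℂ))) • A))ᴴ = exp (t • (Complex.I • Aᴴ)) := by
  rw [← Matrix.exp_conjTranspose, conjTranspose_smul, ← Complex.coe_smul, smul_smul]
  congr 2
  simp [Complex.ext_iff]

theorem R_monotone_derivative_general {n m₁ m₂ : ℕ}
    (A : Matrix (Fin n) (Fin n) ℂ)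
    (θ₁ : Matrix (Fin n) (Fin m₁) ℂ) (θ₂ : Matrix (Fin n) (Fin m₂) ℂ)
    (E : ℝ → Matrix (Fin n) (Fin n) ℂ)
    (hE : ∀ x : ℝ, E x = exp ((-(Complex.I * (x : ℂ))) • A))
    (Λ : ℝ → Matrix (Fin n) (Fin m₁ ⊕ Fin m₂) ℂ)
    (hΛ : ∀ x : ℝ, Λ x = fromCols (E x * θ₁)
      (exp ((Complex.I * (x : ℂ)) • A) * θ₂))
    (j : Matrix (Fin m₁ ⊕ Fin m₂) (Fin m₁ ⊕ Fin m₂) ℂ)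
    (hj : j = fromBlocks 1 0 0 (-1))
    (S : ℝ → Matrix (Fin n) (Fin n) ℂ)
    (hS' : ∀ x : ℝ, HasDerivAt S (Λ x * (Λ x)ᴴ) x)
    (hSid : ∀ x : ℝ, A * S x - S x * Aᴴ = Complex.I • (Λ x * j * (Λ x)ᴴ))
    (R : ℝ → Matrix (Fin n) (Fin n) ℂ)
    (hR : ∀ x : ℝ, R x = E x * S x * (E x)ᴴ) :
    ∀ x : ℝ, 0 ≤ x →
      HasDerivAt R (E x * (Λ x * j * (Λ x)ᴴ + Λ x * (Λ x)ᴴ) * (E x)ᴴ) x ∧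
      E x * (Λ x * j * (Λ x)ᴴ + Λ x * (Λ x)ᴴ) * (E x)ᴴ
        = (2 : ℂ) • (E x * ((E x * θ₁) * (E x * θ₁)ᴴ) * (E x)ᴴ) ∧
      (E x * (Λ x * j * (Λ x)ᴴ + Λ x * (Λ x)ᴴ) * (E x)ᴴ).PosSemidef := by
  intro x _
  have hE_exp (t : ℝ) : E t = exp (t • (-Complex.I • A)) := by
    rw [hE, ← Complex.coe_smul, smul_smul, mul_neg, mul_comm]
  have hE_star_exp (t : ℝ) : (E t)ᴴ = exp (t • (Complex.I • Aᴴ)) := by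
    rw [hE, conjTranspose_exp_neg_I_mul_smul]
  have hR_exp : R = fun t => exp (t • (-Complex.I • A)) * S t * exp (t • (Complex.I • Aᴴ)) := by
    funext t; rw [hR, hE_star_exp, hE_exp]
  have hsum : E x * (Λ x * j * (Λ x)ᴴ + Λ x * (Λ x)ᴴ) * (E x)ᴴ
      = (2 : ℂ) • (E x * ((E x * θ₁) * (E x * θ₁)ᴴ) * (E x)ᴴ) := by
    rw [hΛ, hj, fromCols_mul_signature_mul_conjTranspose_add_self_mul_conjTranspose,
      mul_smul_comm, smul_mul_assoc]
  refine ⟨?_, hsum, ?_⟩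
  · have hderiv := hasDerivAt_exp_smul_mul_mul_exp_smul (hS' x) (-Complex.I • A) (Complex.I • Aᴴ)
    rw [add_right_comm, neg_I_smul_mul_add_mul_I_smul (hSid x)] at hderiv
    rwa [hR_exp, hE_star_exp, hE_exp]
  · rw [hsum]
    exact ((posSemidef_self_mul_conjTranspose _).mul_mul_conjTranspose_same (E x)).smul
      (by norm_num)

/-- If `S' = Λ Λ*`, `A S - S A* = i Λ j Λ*` and `R(x) = e^{-ixA} S(x) e^{ixA*}`,
then `R'(x) = e^{-ixA}(Λ j Λ* + Λ Λ*)e^{ixA*} = 2 e^{-ixA}(e^{-ixA}θ₁)(e^{-ixA}θ₁)* e^{ixA*} ≥ 0`,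
i.e. `R` is monotonically nondecreasing in the Loewner order. -/
theorem R_monotone_derivative {n m₁ m₂ : ℕ}
    (A : Matrix (Fin n) (Fin n) ℂ)
    (θ₁ : Matrix (Fin n) (Fin m₁) ℂ) (θ₂ : Matrix (Fin n) (Fin m₂) ℂ)
    (E : ℝ → Matrix (Fin n) (Fin n) ℂ)
    (hE : ∀ x : ℝ, E x = exp ((-(Complex.I * (x : ℂ))) • A))
    (Λ : ℝ → Matrix (Fin n) (Fin m₁ ⊕ Fin m₂) ℂ)
    (hΛ : ∀ x : ℝ, Λ x = fromCols (E x * θ₁)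
      (exp ((Complex.I * (x : ℂ)) • A) * θ₂))
    (j : Matrix (Fin m₁ ⊕ Fin m₂) (Fin m₁ ⊕ Fin m₂) ℂ)
    (hj : j = fromBlocks 1 0 0 (-1))
    (S : ℝ → Matrix (Fin n) (Fin n) ℂ)
    (hSpos : ∀ x : ℝ, (S x).PosDef)
    (hS' : ∀ x : ℝ, HasDerivAt S (Λ x * (Λ x)ᴴ) x)
    (hSid : ∀ x : ℝ, A * S x - S x * Aᴴ = Complex.I • (Λ x * j * (Λ x)ᴴ))
    (R : ℝ → Matrix (Fin n) (Fin n) ℂ)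
    (hR : ∀ x : ℝ, R x = E x * S x * (E x)ᴴ) :
    ∀ x : ℝ, 0 ≤ x →
      HasDerivAt R (E x * (Λ x * j * (Λ x)ᴴ + Λ x * (Λ x)ᴴ) * (E x)ᴴ) x ∧
      E x * (Λ x * j * (Λ x)ᴴ + Λ x * (Λ x)ᴴ) * (E x)ᴴ
        = (2 : ℂ) • (E x * ((E x * θ₁) * (E x * θ₁)ᴴ) * (E x)ᴴ) ∧
      (E x * (Λ x * j * (Λ x)ᴴ + Λ x * (Λ x)ᴴ) * (E x)ᴴ).PosSemidef :=
  R_monotone_derivative_general A θ₁ θ₂ E hE Λ hΛ j hj S hS' hSid R hR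
end

section
/- Let A be n×n, S invertible n×n, θ₁ an n×m₁ matrix, θ₂ an n×m₂ matrix, and set A^× = A - i θ₁ θ₁* S⁻¹. Then for z ∉ σ(A) ∪ σ(A^×): i θ₂* S⁻¹ (A - zI)⁻¹ θ₁ · (I_{m₁} - i θ₁* S⁻¹ (A - zI)⁻¹ θ₁)⁻¹ = -i θ₂* S⁻¹ (zI - A^×)⁻¹ θ₁. -/
/-!
Put `X = A - z`, `Y = A^× - z`, `U = iθ₁` and `V = θ₁*S⁻¹`, so that `UV = X - Y`. The resolvent
identity `Y⁻¹ - X⁻¹ = X⁻¹UVY⁻¹` shows both that `1 + VY⁻¹U` inverts `1 - VX⁻¹U` and that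
`X⁻¹U(1 + VY⁻¹U) = Y⁻¹U`; multiplying on the left by `θ₂*S⁻¹` gives the identity.
-/

open Matrix

namespace Matrix

variable {l m α : Type*} [Fintype l] [DecidableEq l] [Fintype m] [CommRing α]

protected theorem inv_neg (A : Matrix l l α) : (-A)⁻¹ = -A⁻¹ := by
  by_cases hA : IsUnit A.det
  · exact inv_eq_left_inv (by rw [neg_mul_neg, nonsing_inv_mul A hA])
  · have hnegA : ¬IsUnit (-A).det := by
      rwa [← isUnit_iff_isUnit_det, IsUnit.neg_iff, isUnit_iff_isUnit_det]
    rw [nonsing_inv_apply_not_isUnit A hA, nonsing_inv_apply_not_isUnit _ hnegA, neg_zero]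

section PushThrough

variable {X Y : Matrix l l α} {U : Matrix l m α} {V : Matrix m l α}

theorem inv_mul_mul_mul_inv_of_mul_eq_sub (hXY : IsUnit X ↔ IsUnit Y) (hUV : U * V = X - Y) :
    X⁻¹ * U * V * Y⁻¹ = Y⁻¹ - X⁻¹ := by
  rw [Matrix.mul_assoc X⁻¹, hUV, ← neg_sub, Matrix.mul_neg, Matrix.neg_mul, ← inv_sub_inv hXY,
    neg_sub]

theorem one_sub_mul_inv_mul_inv_of_mul_eq_sub [DecidableEq m] (hXY : IsUnit X ↔ IsUnit Y)
    (hUV : U * V = X - Y) :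
    (1 - V * X⁻¹ * U)⁻¹ = 1 + V * Y⁻¹ * U := by
  have hres := congrArg (fun M => V * M * U) (inv_mul_mul_mul_inv_of_mul_eq_sub hXY hUV)
  refine inv_eq_right_inv ?_
  simp only [Matrix.mul_sub, Matrix.sub_mul, Matrix.mul_assoc] at hres ⊢
  simp only [Matrix.mul_add, Matrix.one_mul, Matrix.mul_one, hres]
  abel

theorem inv_mul_mul_one_sub_inv_eq_inv_mul [DecidableEq m] (hXY : IsUnit X ↔ IsUnit Y)
    (hUV : U * V = X - Y) :
    X⁻¹ * U * (1 - V * X⁻¹ * U)⁻¹ = Y⁻¹ * U := by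
  have hres := congrArg (· * U) (inv_mul_mul_mul_inv_of_mul_eq_sub hXY hUV)
  simp only [Matrix.sub_mul, Matrix.mul_assoc] at hres
  rw [one_sub_mul_inv_mul_inv_of_mul_eq_sub hXY hUV, Matrix.mul_add, Matrix.mul_one]
  simp only [Matrix.mul_assoc, hres]
  abel

end PushThrough

end Matrix

theorem isUnit_sub_smul_one_of_notMem_spectrum {R A : Type*} [CommSemiring R] [Ring A]
    [Algebra R A] {a : A} {r : R} (hr : r ∉ spectrum R a) : IsUnit (a - r • 1) := by
  rw [← Algebra.algebraMap_eq_smul_one, ← neg_sub]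
  exact (spectrum.notMem_iff.mp hr).neg

theorem linear_fractional_identity_general {n m₁ m₂ : ℕ}
    (A S : Matrix (Fin n) (Fin n) ℂ)
    (θ₁ : Matrix (Fin n) (Fin m₁) ℂ) (θ₂ : Matrix (Fin n) (Fin m₂) ℂ)
    (Across : Matrix (Fin n) (Fin n) ℂ)
    (hAcross : Across = A - Complex.I • (θ₁ * θ₁ᴴ * S⁻¹))
    (z : ℂ)
    (hz : z ∉ spectrum ℂ A) (hz' : z ∉ spectrum ℂ Across) :
    Complex.I • (θ₂ᴴ * S⁻¹ * (A - z • 1)⁻¹ * θ₁) *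
        (1 - Complex.I • (θ₁ᴴ * S⁻¹ * (A - z • 1)⁻¹ * θ₁))⁻¹
      = -Complex.I • (θ₂ᴴ * S⁻¹ * (z • 1 - Across)⁻¹ * θ₁) := by
  have hUV : (Complex.I • θ₁) * (θ₁ᴴ * S⁻¹) = (A - z • 1) - (Across - z • 1) := by
    rw [hAcross, Matrix.smul_mul, ← Matrix.mul_assoc]
    abel
  have hpush := inv_mul_mul_one_sub_inv_eq_inv_mul
    (iff_of_true (isUnit_sub_smul_one_of_notMem_spectrum hz)
      (isUnit_sub_smul_one_of_notMem_spectrum hz')) hUV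
  calc Complex.I • (θ₂ᴴ * S⁻¹ * (A - z • 1)⁻¹ * θ₁) *
        (1 - Complex.I • (θ₁ᴴ * S⁻¹ * (A - z • 1)⁻¹ * θ₁))⁻¹
      = θ₂ᴴ * S⁻¹ * ((A - z • 1)⁻¹ * (Complex.I • θ₁) *
          (1 - θ₁ᴴ * S⁻¹ * (A - z • 1)⁻¹ * (Complex.I • θ₁))⁻¹) := by
        simp only [Matrix.mul_smul, Matrix.smul_mul, Matrix.mul_assoc]
    _ = θ₂ᴴ * S⁻¹ * ((Across - z • 1)⁻¹ * (Complex.I • θ₁)) := by rw [hpush]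
    _ = -Complex.I • (θ₂ᴴ * S⁻¹ * (z • 1 - Across)⁻¹ * θ₁) := by
        rw [← neg_sub, Matrix.inv_neg]
        simp only [Matrix.mul_smul, Matrix.mul_neg, Matrix.neg_mul, neg_smul, smul_neg,
          Matrix.mul_assoc]

/-- For invertible `S`, `A^× = A - iθ₁θ₁*S⁻¹` and `z ∉ σ(A) ∪ σ(A^×)`:
`iθ₂*S⁻¹(A - zI)⁻¹θ₁ (I - iθ₁*S⁻¹(A - zI)⁻¹θ₁)⁻¹ = -iθ₂*S⁻¹(zI - A^×)⁻¹θ₁`. -/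
theorem linear_fractional_identity {n m₁ m₂ : ℕ}
    (A S : Matrix (Fin n) (Fin n) ℂ)
    (θ₁ : Matrix (Fin n) (Fin m₁) ℂ) (θ₂ : Matrix (Fin n) (Fin m₂) ℂ)
    (hS : IsUnit S)
    (Across : Matrix (Fin n) (Fin n) ℂ)
    (hAcross : Across = A - Complex.I • (θ₁ * θ₁ᴴ * S⁻¹))
    (z : ℂ)
    (hz : z ∉ spectrum ℂ A) (hz' : z ∉ spectrum ℂ Across) :
    Complex.I • (θ₂ᴴ * S⁻¹ * (A - z • 1)⁻¹ * θ₁) *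
        (1 - Complex.I • (θ₁ᴴ * S⁻¹ * (A - z • 1)⁻¹ * θ₁))⁻¹
      = -Complex.I • (θ₂ᴴ * S⁻¹ * (z • 1 - Across)⁻¹ * θ₁) :=
  linear_fractional_identity_general A S θ₁ θ₂ Across hAcross z hz hz'
end

section
/- Let A be n×n complex, θ₁ n×m₁, θ₂ n×m₂, Λ(x) = [e^{-ixA}θ₁, e^{ixA}θ₂], j = diag(I_{m₁}, -I_{m₂}), and S(x) = S(0) + ∫₀ˣ Λ(t) j Λ(t)* dt with S(x) invertible, satisfying the identity A S(x) - S(x) A* = i Λ(x) Λ(x)*. Define Q(x) = e^{ixA} S(x) e^{-ixA*}. Then Q'(x) = e^{ixA} Λ(x)(j - I_m) Λ(x)* e^{-ixA*} = -2 e^{ixA}(e^{ixA}θ₂)(e^{ixA}θ₂)* e^{-ixA*} ≤ 0, so Q is monotonically nonincreasing in the Loewner order. -/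
open Matrix NormedSpace
open scoped ComplexOrder

attribute [local instance] Matrix.frobeniusNormedAddCommGroup Matrix.frobeniusNormedSpace
attribute [local instance] Matrix.frobeniusNormedRing Matrix.frobeniusNormedAlgebra

/-!
Write `e^{ixA} = exp (x • M)` with `M = i A`. The product rule gives
`Q' = e^{ixA} (M S + S Mᴴ + S') e^{-ixA*}`, and the Lyapunov identity
`A S - S A* = i Λ Λ*` turns `M S + S Mᴴ` into `-Λ Λ*`, so `Q' = e^{ixA} Λ (j - 1) Λ* e^{-ixA*}`.
Since `j - 1 = diag(0, -2)`, only the second block column `e^{ixA} θ₂` of `Λ` survives, leaving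
`-2` times a Gram matrix.
-/

namespace Matrix

variable {ι κ : Type*} [Fintype ι]

theorem hasDerivAt_exp_smul_mul_mul_exp_smul_conjTranspose {𝕜 : Type*} [RCLike 𝕜] [DecidableEq ι]
    (M : Matrix ι ι 𝕜) {S : ℝ → Matrix ι ι 𝕜} {S' : Matrix ι ι 𝕜} {x : ℝ} (hS : HasDerivAt S S' x) :
    HasDerivAt (fun t : ℝ => exp (t • M) * S t * (exp (t • M))ᴴ)
      (exp (x • M) * (M * S x + S x * Mᴴ + S') * (exp (x • M))ᴴ) x := by
  have hexp_conj : ∀ t : ℝ, (exp (t • M))ᴴ = exp (t • Mᴴ) := fun t => by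
    rw [← exp_conjTranspose, conjTranspose_smul, star_trivial]
  have hE := hasDerivAt_exp_smul_const' (𝕂 := ℝ) M x
  have hE' : HasDerivAt (fun t : ℝ => (exp (t • M))ᴴ) (Mᴴ * (exp (x • M))ᴴ) x := by
    rw [funext hexp_conj, hexp_conj x]
    exact hasDerivAt_exp_smul_const' (𝕂 := ℝ) Mᴴ x
  have hcomm : M * exp (x • M) = exp (x • M) * M :=
    ((Commute.refl M).smul_right x).exp_right.eq
  have hsum : (M * exp (x • M) * S x + exp (x • M) * S') * (exp (x • M))ᴴ
      + exp (x • M) * S x * (Mᴴ * (exp (x • M))ᴴ)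
      = exp (x • M) * (M * S x + S x * Mᴴ + S') * (exp (x • M))ᴴ := by
    rw [hcomm]
    noncomm_ring
  exact ((hE.mul hS).mul hE').congr_deriv hsum

theorem I_smul_mul_add_mul_conjTranspose_I_smul {A S L : Matrix ι ι ℂ}
    (h : A * S - S * Aᴴ = Complex.I • L) :
    (Complex.I • A) * S + S * (Complex.I • A)ᴴ = -L := by
  have hIA : (Complex.I • A)ᴴ = (-Complex.I) • Aᴴ := by
    rw [conjTranspose_smul, Complex.star_def, Complex.conj_I]
  calc (Complex.I • A) * S + S * (Complex.I • A)ᴴ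
      = Complex.I • (A * S - S * Aᴴ) := by
        rw [hIA, smul_mul_assoc, mul_smul_comm, smul_sub, neg_smul, sub_eq_add_neg]
    _ = -L := by rw [h, smul_smul, Complex.I_mul_I, neg_one_smul]

theorem fromCols_mul_signature_sub_one_mul_conjTranspose {α m₁ m₂ : Type*} [CommRing α]
    [StarRing α] [Fintype m₁] [Fintype m₂] [DecidableEq m₁] [DecidableEq m₂]
    (P : Matrix κ m₁ α) (R : Matrix κ m₂ α) :
    fromCols P R * (fromBlocks 1 0 0 (-1) - 1 : Matrix (m₁ ⊕ m₂) (m₁ ⊕ m₂) α) * (fromCols P R)ᴴ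
      = -((2 : α) • (R * Rᴴ)) := by
  have hsig : (fromBlocks 1 0 0 (-1) - 1 : Matrix (m₁ ⊕ m₂) (m₁ ⊕ m₂) α)
      = fromBlocks 0 0 0 ((-2 : α) • 1) := by
    rw [← fromBlocks_one, sub_eq_add_neg, fromBlocks_neg, fromBlocks_add]
    simp only [add_neg_cancel, neg_zero, add_zero]
    congr 1
    module
  rw [hsig, fromCols_mul_fromBlocks, conjTranspose_fromCols_eq_fromRows_conjTranspose,
    fromCols_mul_fromRows]
  simp [smul_mul, neg_smul]

theorem PosSemidef.conj_self_mul_conjTranspose {𝕜 μ : Type*} [RCLike 𝕜] [Fintype μ] [Fintype κ]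
    (F : Matrix μ ι 𝕜) (B : Matrix ι κ 𝕜) :
    (F * (B * Bᴴ) * Fᴴ).PosSemidef := by
  simpa only [conjTranspose_mul, Matrix.mul_assoc] using posSemidef_self_mul_conjTranspose (F * B)

end Matrix

theorem Q_monotone_decreasing_derivative_general {n m₁ m₂ : ℕ}
    (A : Matrix (Fin n) (Fin n) ℂ)
    (θ₁ : Matrix (Fin n) (Fin m₁) ℂ) (θ₂ : Matrix (Fin n) (Fin m₂) ℂ)
    (F : ℝ → Matrix (Fin n) (Fin n) ℂ)
    (hF : ∀ x : ℝ, F x = exp ((Complex.I * (x : ℂ)) • A))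
    (Λ : ℝ → Matrix (Fin n) (Fin m₁ ⊕ Fin m₂) ℂ)
    (hΛ : ∀ x : ℝ, Λ x = fromCols
      (exp ((-(Complex.I * (x : ℂ))) • A) * θ₁) (F x * θ₂))
    (j : Matrix (Fin m₁ ⊕ Fin m₂) (Fin m₁ ⊕ Fin m₂) ℂ)
    (hj : j = fromBlocks 1 0 0 (-1))
    (S : ℝ → Matrix (Fin n) (Fin n) ℂ)
    (hS' : ∀ x : ℝ, HasDerivAt S (Λ x * j * (Λ x)ᴴ) x)
    (hSid : ∀ x : ℝ, A * S x - S x * Aᴴ = Complex.I • (Λ x * (Λ x)ᴴ))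
    (Q : ℝ → Matrix (Fin n) (Fin n) ℂ)
    (hQ : ∀ x : ℝ, Q x = F x * S x * (F x)ᴴ) :
    ∀ x : ℝ, 0 ≤ x →
      HasDerivAt Q (F x * (Λ x * (j - 1) * (Λ x)ᴴ) * (F x)ᴴ) x ∧
      F x * (Λ x * (j - 1) * (Λ x)ᴴ) * (F x)ᴴ
        = -((2 : ℂ) • (F x * ((F x * θ₂) * (F x * θ₂)ᴴ) * (F x)ᴴ)) ∧
      (-(F x * (Λ x * (j - 1) * (Λ x)ᴴ) * (F x)ᴴ)).PosSemidef := by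
  intro x _
  have hF_exp : F = fun t : ℝ => exp (t • (Complex.I • A)) := funext fun t => by
    rw [hF, ← smul_assoc, Complex.real_smul, mul_comm]
  have hQ_eq : Q = fun t : ℝ => F t * S t * (F t)ᴴ := funext hQ
  have hderiv : HasDerivAt Q (F x * (Λ x * (j - 1) * (Λ x)ᴴ) * (F x)ᴴ) x := by
    have hsplit : Λ x * (j - 1) * (Λ x)ᴴ = -(Λ x * (Λ x)ᴴ) + Λ x * j * (Λ x)ᴴ := by
      rw [Matrix.mul_sub, Matrix.mul_one, Matrix.sub_mul, neg_add_eq_sub]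
    rw [hQ_eq, hF_exp, hsplit, ← I_smul_mul_add_mul_conjTranspose_I_smul (hSid x)]
    exact hasDerivAt_exp_smul_mul_mul_exp_smul_conjTranspose (Complex.I • A) (hS' x)
  have hvalue : F x * (Λ x * (j - 1) * (Λ x)ᴴ) * (F x)ᴴ
      = -((2 : ℂ) • (F x * ((F x * θ₂) * (F x * θ₂)ᴴ) * (F x)ᴴ)) := by
    rw [hΛ x, hj, fromCols_mul_signature_sub_one_mul_conjTranspose, Matrix.mul_neg, Matrix.neg_mul, Matrix.mul_smul, Matrix.smul_mul]
  refine ⟨hderiv, hvalue, ?_⟩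
  rw [hvalue, neg_neg, two_smul]
  exact (PosSemidef.conj_self_mul_conjTranspose _ _).add
    (PosSemidef.conj_self_mul_conjTranspose _ _)

/-- If `S' = Λ j Λ*`, `A S - S A* = i Λ Λ*`, `S(x)` invertible and
`Q(x) = e^{ixA} S(x) e^{-ixA*}`, then
`Q'(x) = e^{ixA} Λ(x)(j - I)Λ(x)* e^{-ixA*} = -2 e^{ixA}(e^{ixA}θ₂)(e^{ixA}θ₂)* e^{-ixA*} ≤ 0`,
so `Q` is nonincreasing in the Loewner order. -/
theorem Q_monotone_decreasing_derivative {n m₁ m₂ : ℕ}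
    (A : Matrix (Fin n) (Fin n) ℂ)
    (θ₁ : Matrix (Fin n) (Fin m₁) ℂ) (θ₂ : Matrix (Fin n) (Fin m₂) ℂ)
    (F : ℝ → Matrix (Fin n) (Fin n) ℂ)
    (hF : ∀ x : ℝ, F x = exp ((Complex.I * (x : ℂ)) • A))
    (Λ : ℝ → Matrix (Fin n) (Fin m₁ ⊕ Fin m₂) ℂ)
    (hΛ : ∀ x : ℝ, Λ x = fromCols
      (exp ((-(Complex.I * (x : ℂ))) • A) * θ₁) (F x * θ₂))
    (j : Matrix (Fin m₁ ⊕ Fin m₂) (Fin m₁ ⊕ Fin m₂) ℂ)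
    (hj : j = fromBlocks 1 0 0 (-1))
    (S : ℝ → Matrix (Fin n) (Fin n) ℂ)
    (hSinv : ∀ x : ℝ, IsUnit (S x))
    (hS' : ∀ x : ℝ, HasDerivAt S (Λ x * j * (Λ x)ᴴ) x)
    (hSid : ∀ x : ℝ, A * S x - S x * Aᴴ = Complex.I • (Λ x * (Λ x)ᴴ))
    (Q : ℝ → Matrix (Fin n) (Fin n) ℂ)
    (hQ : ∀ x : ℝ, Q x = F x * S x * (F x)ᴴ) :
    ∀ x : ℝ, 0 ≤ x →
      HasDerivAt Q (F x * (Λ x * (j - 1) * (Λ x)ᴴ) * (F x)ᴴ) x ∧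
      F x * (Λ x * (j - 1) * (Λ x)ᴴ) * (F x)ᴴ
        = -((2 : ℂ) • (F x * ((F x * θ₂) * (F x * θ₂)ᴴ) * (F x)ᴴ)) ∧
      (-(F x * (Λ x * (j - 1) * (Λ x)ᴴ) * (F x)ᴴ)).PosSemidef :=
  Q_monotone_decreasing_derivative_general A θ₁ θ₂ F hF Λ hΛ j hj S hS' hSid Q hQ
end

section
/- Let A be an n×n complex matrix and θ₁ an n×m₁ matrix such that the pair (A, θ₁) is controllable (i.e., span ⋃_{k=0}^{n-1} Im(A^k θ₁) = ℂⁿ). Then for any vector ξ ∈ ℂⁿ, if θ₁*(A* - tI)⁻¹ξ = 0 for all t in some nonempty open subset of ℝ \ σ(A*), then ξ = 0. Consequently, the matrix ∫_{-∞}^{∞} (A - tI)⁻¹θ₁θ₁*(A* - tI)⁻¹ dt is positive definite whenever σ(A) ∩ ℝ = ∅ and the integral converges. -/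
/-!
Write `B = Aᴴ`. By Cramer's rule `θ₁ᴴ (B - z)⁻¹ ξ` is `det (B - z)⁻¹` times a vector of polynomials
in `z`, so vanishing on an open set of reals forces it to vanish on the whole resolvent set.
Since `z (B - z)⁻¹ → -1` as `z → ∞`, this gives `θ₁ᴴ ξ = 0`, and the identity
`(B - z)⁻¹ B = 1 + z (B - z)⁻¹` passes the vanishing on from `ξ` to `B ξ`. Hence
`(A ^ k θ₁)ᴴ ξ = θ₁ᴴ B ^ k ξ = 0` for all `k`, so `ξ` is orthogonal to a spanning set.

The integrand is `W tᴴ W t` with `W t = θ₁ᴴ (Aᴴ - t)⁻¹`, so `xᴴ (∫ …) x = ∫ ‖W t x‖²`, the integral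
of a continuous nonnegative function which, by the first part, is not identically zero.
-/

open Matrix MeasureTheory Filter Topology Bornology
open scoped ComplexOrder

attribute [local instance] Matrix.frobeniusNormedAddCommGroup Matrix.frobeniusNormedSpace

theorem RCLike.integral_pos_of_integrable_nonneg_nonzero {X 𝕜 : Type*} [RCLike 𝕜]
    [MeasurableSpace X] [TopologicalSpace X] {μ : Measure X} [μ.IsOpenPosMeasure] {g : X → 𝕜}
    {x₀ : X} (hg : Continuous g) (hint : Integrable g μ)
    (hnonneg : ∀ x, 0 ≤ g x) (hx₀ : g x₀ ≠ 0) : 0 < ∫ x, g x ∂μ := by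
  have hreal (x : X) := RCLike.nonneg_iff.mp (hnonneg x)
  rw [RCLike.pos_iff, ← integral_re hint, ← integral_im hint]
  refine ⟨MeasureTheory.integral_pos_of_integrable_nonneg_nonzero
    (RCLike.continuous_re.comp hg) hint.re (fun x => (hreal x).1)
    fun hre => hx₀ (RCLike.ext (by simpa using hre) (by simp [(hreal x₀).2])), ?_⟩
  simp [(hreal _).2]

namespace Matrix

section Field

variable {m n K : Type*} [Fintype n] [DecidableEq n] [Field K]

theorem notMem_spectrum_iff_isUnit_det_sub_smul_one {B : Matrix n n K} {z : K} :
    z ∉ spectrum K B ↔ IsUnit (B - z • 1).det := by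
  rw [spectrum.notMem_iff, Algebra.algebraMap_eq_smul_one, ← isUnit_iff_isUnit_det,
    ← IsUnit.neg_iff, neg_sub]

theorem inv_sub_smul_one_mul_self {B : Matrix n n K} {z : K} (hz : z ∉ spectrum K B) :
    (B - z • 1)⁻¹ * B = 1 + z • (B - z • 1)⁻¹ := by
  calc (B - z • 1)⁻¹ * B = (B - z • 1)⁻¹ * ((B - z • 1) + z • 1) := by rw [sub_add_cancel]
    _ = 1 + z • (B - z • 1)⁻¹ := by
      rw [Matrix.mul_add, nonsing_inv_mul _ (notMem_spectrum_iff_isUnit_det_sub_smul_one.mp hz),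
        Matrix.mul_smul, Matrix.mul_one]

theorem mulVec_inv_mulVec_eq_zero_iff (C : Matrix m n K) {M : Matrix n n K} (hM : IsUnit M.det)
    (v : n → K) : C *ᵥ (M⁻¹ *ᵥ v) = 0 ↔ C *ᵥ (M.adjugate *ᵥ v) = 0 := by
  rw [inv_def, smul_mulVec, mulVec_smul, smul_eq_zero, Ring.inverse_eq_inv',
    or_iff_right (inv_ne_zero hM.ne_zero)]

theorem exists_polynomial_eval_eq_mulVec_adjugate_sub_smul_one (C : Matrix m n K)
    (B : Matrix n n K) (v : n → K) :
    ∃ q : m → Polynomial K, ∀ z i, (q i).eval z = (C *ᵥ ((B - z • 1).adjugate *ᵥ v)) i := by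
  refine ⟨(C.map Polynomial.C * (B.map Polynomial.C - (Polynomial.X : Polynomial K) • 1).adjugate)
    *ᵥ (Polynomial.C ∘ v), fun z i => ?_⟩
  have hB : (Polynomial.evalRingHom z).mapMatrix
      (B.map Polynomial.C - (Polynomial.X : Polynomial K) • 1) = B - z • 1 := by
    ext j k
    by_cases hjk : j = k <;> simp [hjk]
  rw [← Polynomial.coe_evalRingHom, RingHom.map_mulVec, Matrix.map_mul, ← RingHom.mapMatrix_apply,
    RingHom.map_adjugate, hB, mulVec_mulVec]
  congr
  · ext j k; simp
  · ext j; simp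

theorem mulVec_inv_sub_smul_one_mulVec_eq_zero_of_infinite {C : Matrix m n K} {B : Matrix n n K}
    {v : n → K} {S : Set K} (hS : S.Infinite)
    (hv : ∀ z ∈ S, z ∉ spectrum K B ∧ C *ᵥ ((B - z • 1)⁻¹ *ᵥ v) = 0) {z : K}
    (hz : z ∉ spectrum K B) : C *ᵥ ((B - z • 1)⁻¹ *ᵥ v) = 0 := by
  obtain ⟨q, hq⟩ := exists_polynomial_eval_eq_mulVec_adjugate_sub_smul_one C B v
  have hq0 (i : m) : q i = 0 := by
    refine Polynomial.eq_zero_of_infinite_isRoot _ (hS.mono fun w hw => ?_)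
    obtain ⟨hw, hvw⟩ := hv w hw
    rw [mulVec_inv_mulVec_eq_zero_iff C (notMem_spectrum_iff_isUnit_det_sub_smul_one.mp hw)] at hvw
    show (q i).IsRoot w
    rw [Polynomial.IsRoot.def, hq, hvw, Pi.zero_apply]
  rw [mulVec_inv_mulVec_eq_zero_iff C (notMem_spectrum_iff_isUnit_det_sub_smul_one.mp hz)]
  ext i
  simp [← hq, hq0]

theorem mulVec_inv_sub_smul_one_mulVec_mulVec_eq_zero {C : Matrix m n K} {B : Matrix n n K}
    {v : n → K} (hv : ∀ z ∉ spectrum K B, C *ᵥ ((B - z • 1)⁻¹ *ᵥ v) = 0) (hCv : C *ᵥ v = 0)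
    {z : K} (hz : z ∉ spectrum K B) : C *ᵥ ((B - z • 1)⁻¹ *ᵥ (B *ᵥ v)) = 0 := by
  rw [mulVec_mulVec v, inv_sub_smul_one_mul_self hz, add_mulVec, one_mulVec, smul_mulVec,
    mulVec_add, mulVec_smul, hCv, hv z hz, smul_zero, add_zero]

end Field

section Normed

variable {m n 𝕜 : Type*} [Fintype n] [DecidableEq n] [NontriviallyNormedField 𝕜]

theorem continuousAt_inv_of_isUnit_det {M : Matrix n n 𝕜} (hM : IsUnit M.det) :
    ContinuousAt Inv.inv M :=
  continuousAt_matrix_inv M (by simpa [Ring.inverse_eq_inv'] using continuousAt_inv₀ hM.ne_zero)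

theorem continuousOn_inv_sub_smul_one (B : Matrix n n 𝕜) :
    ContinuousOn (fun z : 𝕜 => (B - z • 1)⁻¹) (spectrum 𝕜 B)ᶜ := fun z hz =>
  (ContinuousAt.comp (f := fun z : 𝕜 => B - z • 1)
    (continuousAt_inv_of_isUnit_det (notMem_spectrum_iff_isUnit_det_sub_smul_one.mp hz))
    (by fun_prop)).continuousWithinAt

theorem tendsto_smul_inv_sub_smul_one (B : Matrix n n 𝕜) :
    Tendsto (fun z : 𝕜 => z • (B - z • 1)⁻¹) (cobounded 𝕜) (𝓝 (-1)) := by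
  have hlim : Tendsto (fun z : 𝕜 => z⁻¹ • B - 1) (cobounded 𝕜) (𝓝 (-1)) := by
    simpa using ((tendsto_inv₀_cobounded (α := 𝕜)).smul_const B).sub_const 1
  have hcomp : Tendsto (fun z : 𝕜 => (z⁻¹ • B - 1)⁻¹) (cobounded 𝕜) (𝓝 (-1)) := by
    have h := (continuousAt_inv_of_isUnit_det (M := -1) (by simp [det_neg])).tendsto.comp hlim
    rwa [inv_eq_left_inv (by simp : (-1 : Matrix n n 𝕜) * -1 = 1)] at h
  refine hcomp.congr' ?_
  filter_upwards [isBounded_def.mp B.finite_spectrum.isBounded, eventually_ne_cobounded 0]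
    with z hz hz0
  refine inv_eq_left_inv ?_
  have hfactor : z⁻¹ • B - 1 = z⁻¹ • (B - z • 1) := by
    rw [smul_sub, smul_smul, inv_mul_cancel₀ hz0, one_smul]
  rw [hfactor, smul_mul_smul_comm, mul_inv_cancel₀ hz0, one_smul,
    nonsing_inv_mul _ (notMem_spectrum_iff_isUnit_det_sub_smul_one.mp hz)]

theorem mulVec_eq_zero_of_forall_mulVec_inv_sub_smul_one_mulVec_eq_zero {C : Matrix m n 𝕜}
    {B : Matrix n n 𝕜} {v : n → 𝕜} (hv : ∀ z ∉ spectrum 𝕜 B, C *ᵥ ((B - z • 1)⁻¹ *ᵥ v) = 0) :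
    C *ᵥ v = 0 := by
  have hlim : Tendsto (fun z : 𝕜 => C *ᵥ ((z • (B - z • 1)⁻¹) *ᵥ v)) (cobounded 𝕜)
      (𝓝 (C *ᵥ ((-1) *ᵥ v))) :=
    ((continuous_const.matrix_mulVec (continuous_id.matrix_mulVec continuous_const)).tendsto
      _).comp (tendsto_smul_inv_sub_smul_one B)
  have hzero : ∀ᶠ z in cobounded 𝕜, C *ᵥ ((z • (B - z • 1)⁻¹) *ᵥ v) = 0 := by
    filter_upwards [isBounded_def.mp B.finite_spectrum.isBounded] with z hz
    rw [smul_mulVec, mulVec_smul, hv z hz, smul_zero]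
  have h := tendsto_nhds_unique hlim (tendsto_const_nhds.congr' (hzero.mono fun _ h => h.symm))
  simpa [neg_mulVec, mulVec_neg] using h

theorem mulVec_pow_mulVec_eq_zero_of_forall_mulVec_inv_sub_smul_one_mulVec_eq_zero
    {C : Matrix m n 𝕜} {B : Matrix n n 𝕜} {v : n → 𝕜}
    (hv : ∀ z ∉ spectrum 𝕜 B, C *ᵥ ((B - z • 1)⁻¹ *ᵥ v) = 0) (k : ℕ) :
    C *ᵥ (B ^ k *ᵥ v) = 0 := by
  induction k generalizing v with
  | zero => simpa using mulVec_eq_zero_of_forall_mulVec_inv_sub_smul_one_mulVec_eq_zero hv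
  | succ k ih =>
    rw [pow_succ, ← mulVec_mulVec]
    exact ih fun z hz => mulVec_inv_sub_smul_one_mulVec_mulVec_eq_zero hv
      (mulVec_eq_zero_of_forall_mulVec_inv_sub_smul_one_mulVec_eq_zero hv) hz

end Normed

section Integral

/- Instance search takes the topology of `Matrix` from `Matrix.topologicalSpace`, for which no
`ContinuousENorm` is found; integrability therefore names the Frobenius norm's instance, as in the
statement. -/

variable {X m n 𝕜 : Type*} [Fintype m] [Fintype n] [RCLike 𝕜] [MeasurableSpace X]
  {μ : Measure X}

def dotProductMulVecCLM (v : m → 𝕜) (w : n → 𝕜) : Matrix m n 𝕜 →L[𝕜] 𝕜 :=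
  LinearMap.toContinuousLinearMap
    { toFun := fun M => v ⬝ᵥ (M *ᵥ w)
      map_add' := fun M N => by rw [add_mulVec, dotProduct_add]
      map_smul' := fun c M => by rw [smul_mulVec, dotProduct_smul]; rfl }

theorem integrable_dotProduct_mulVec {f : X → Matrix m n 𝕜} (v : m → 𝕜) (w : n → 𝕜)
    (hf : @Integrable _ _ SeminormedAddGroup.toContinuousENorm _ _ f μ) :
    Integrable (fun x => v ⬝ᵥ (f x *ᵥ w)) μ :=
  (dotProductMulVecCLM v w).integrable_comp hf

theorem integral_dotProduct_mulVec {f : X → Matrix m n 𝕜} (v : m → 𝕜) (w : n → 𝕜)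
    (hf : @Integrable _ _ SeminormedAddGroup.toContinuousENorm _ _ f μ) :
    ∫ x, v ⬝ᵥ (f x *ᵥ w) ∂μ = v ⬝ᵥ ((∫ x, f x ∂μ) *ᵥ w) :=
  (dotProductMulVecCLM v w).integral_comp_comm hf

theorem integral_conjTranspose (f : X → Matrix n n 𝕜) : ∫ x, (f x)ᴴ ∂μ = (∫ x, f x ∂μ)ᴴ :=
  (starL' ℝ : Matrix n n 𝕜 ≃L[ℝ] Matrix n n 𝕜).integral_comp_comm f

theorem posDef_integral_conjTranspose_mul_self [TopologicalSpace X] [μ.IsOpenPosMeasure]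
    {W : X → Matrix m n 𝕜} (hW : Continuous W)
    (hint : @Integrable _ _ SeminormedAddGroup.toContinuousENorm _ _ (fun x => (W x)ᴴ * W x) μ)
    (hinj : ∀ v ≠ 0, ∃ x, W x *ᵥ v ≠ 0) : (∫ x, (W x)ᴴ * W x ∂μ).PosDef := by
  refine posDef_iff_dotProduct_mulVec.mpr ⟨?_, fun v hv => ?_⟩
  · rw [IsHermitian, ← integral_conjTranspose]
    simp only [conjTranspose_mul, conjTranspose_conjTranspose]
  · obtain ⟨x₀, hx₀⟩ := hinj v hv
    have hquad (x : X) : star v ⬝ᵥ (((W x)ᴴ * W x) *ᵥ v) = star (W x *ᵥ v) ⬝ᵥ (W x *ᵥ v) := by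
      rw [← mulVec_mulVec, dotProduct_mulVec, star_mulVec]
    rw [← integral_dotProduct_mulVec _ _ hint]
    have hint' := integrable_dotProduct_mulVec (star v) v hint
    simp only [hquad] at hint' ⊢
    exact RCLike.integral_pos_of_integrable_nonneg_nonzero (by fun_prop) hint'
      (fun x => dotProduct_star_self_nonneg _) (dotProduct_star_self_eq_zero.not.mpr hx₀)

end Integral

theorem eq_zero_of_forall_conjTranspose_mulVec_eq_zero {ι m n R : Type*} [Fintype m] [Fintype n] [Field R]
    [StarRing R] [PartialOrder R] [StarOrderedRing R] {M : ι → Matrix n m R}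
    (hspan : Submodule.span R (⋃ i, Set.range (M i *ᵥ ·)) = ⊤) {ξ : n → R}
    (hξ : ∀ i, (M i)ᴴ *ᵥ ξ = 0) : ξ = 0 := by
  have horth : ∀ v ∈ Submodule.span R (⋃ i, Set.range (M i *ᵥ ·)), star ξ ⬝ᵥ v = 0 := by
    intro v hv
    induction hv using Submodule.span_induction with
    | mem v hv =>
      obtain ⟨i, w, rfl⟩ := Set.mem_iUnion.mp hv
      rw [dotProduct_mulVec, ← conjTranspose_conjTranspose (M i), ← star_mulVec, hξ, star_zero,
        zero_dotProduct]
    | zero => exact dotProduct_zero _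
    | add v w _ _ hv hw => rw [dotProduct_add, hv, hw, add_zero]
    | smul c v _ hv => rw [dotProduct_smul, hv, smul_zero]
  exact dotProduct_star_self_eq_zero.mp (horth ξ (hspan ▸ Submodule.mem_top))

section Controllability

variable {m n 𝕜 : Type*} [Fintype m] [Fintype n] [DecidableEq n] [RCLike 𝕜]

theorem notMem_spectrum_conjTranspose {A : Matrix n n 𝕜} {z : 𝕜} (hz : z ∉ spectrum 𝕜 A) :
    star z ∉ spectrum 𝕜 Aᴴ := by
  rwa [← star_eq_conjTranspose, spectrum.map_star, Set.mem_star, star_star]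

theorem eq_zero_of_span_pow_mul_eq_top {ι : Type*} {A : Matrix n n 𝕜} {θ : Matrix n m 𝕜}
    (k : ι → ℕ) (hctrl : Submodule.span 𝕜 (⋃ i, Set.range ((A ^ k i * θ) *ᵥ ·)) = ⊤)
    {ξ : n → 𝕜} (hξ : ∀ z ∉ spectrum 𝕜 Aᴴ, θᴴ *ᵥ ((Aᴴ - z • 1)⁻¹ *ᵥ ξ) = 0) : ξ = 0 :=
  eq_zero_of_forall_conjTranspose_mulVec_eq_zero hctrl fun i => by
    rw [conjTranspose_mul, conjTranspose_pow, ← mulVec_mulVec]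
    exact mulVec_pow_mulVec_eq_zero_of_forall_mulVec_inv_sub_smul_one_mulVec_eq_zero hξ (k i)

end Controllability

end Matrix

/-- If the pair `(A, θ₁)` is controllable, then any `ξ` with
`θ₁*(A* - tI)⁻¹ ξ = 0` for all `t` in a nonempty open subset of `ℝ` avoiding `σ(A*)`
vanishes; consequently, if `σ(A) ∩ ℝ = ∅` and the integral converges, the matrix
`∫_ℝ (A - tI)⁻¹ θ₁θ₁* (A* - tI)⁻¹ dt` is positive definite. -/
theorem controllability_integral_posdef {n m₁ : ℕ}
    (A : Matrix (Fin n) (Fin n) ℂ) (θ₁ : Matrix (Fin n) (Fin m₁) ℂ)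
    (hctrl : Submodule.span ℂ
      (⋃ k : Fin n, Set.range (fun v : Fin m₁ → ℂ => (A ^ (k : ℕ) * θ₁) *ᵥ v)) = ⊤) :
    (∀ ξ : Fin n → ℂ, ∀ U : Set ℝ, IsOpen U → U.Nonempty →
      (∀ t ∈ U, (t : ℂ) ∉ spectrum ℂ Aᴴ ∧
        θ₁ᴴ *ᵥ ((Aᴴ - (t : ℂ) • 1)⁻¹ *ᵥ ξ) = 0) → ξ = 0) ∧
    ((∀ t : ℝ, (t : ℂ) ∉ spectrum ℂ A) →
      @Integrable _ _ SeminormedAddGroup.toContinuousENorm _ _ (fun t : ℝ =>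
        (A - (t : ℂ) • 1)⁻¹ * (θ₁ * θ₁ᴴ) * (Aᴴ - (t : ℂ) • 1)⁻¹) volume →
      (∫ t : ℝ,
        (A - (t : ℂ) • 1)⁻¹ * (θ₁ * θ₁ᴴ) * (Aᴴ - (t : ℂ) • 1)⁻¹).PosDef) := by
  have hobs : ∀ ξ : Fin n → ℂ, ∀ U : Set ℝ, IsOpen U → U.Nonempty →
      (∀ t ∈ U, (t : ℂ) ∉ spectrum ℂ Aᴴ ∧ θ₁ᴴ *ᵥ ((Aᴴ - (t : ℂ) • 1)⁻¹ *ᵥ ξ) = 0) → ξ = 0 := by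
    rintro ξ U hU ⟨t₀, ht₀⟩ hξ
    have hU_inf : (((↑) : ℝ → ℂ) '' U).Infinite :=
      (infinite_of_mem_nhds t₀ (hU.mem_nhds ht₀)).image Complex.ofReal_injective.injOn
    refine eq_zero_of_span_pow_mul_eq_top (fun k : Fin n => (k : ℕ)) hctrl fun z hz => ?_
    exact mulVec_inv_sub_smul_one_mulVec_eq_zero_of_infinite hU_inf
      (by rintro _ ⟨t, ht, rfl⟩; exact hξ t ht) hz
  refine ⟨hobs, fun hA hint => ?_⟩
  have hAH (t : ℝ) : (t : ℂ) ∉ spectrum ℂ Aᴴ := by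
    simpa using notMem_spectrum_conjTranspose (hA t)
  have hgram (t : ℝ) : (A - (t : ℂ) • 1)⁻¹ * (θ₁ * θ₁ᴴ) * (Aᴴ - (t : ℂ) • 1)⁻¹ =
      (θ₁ᴴ * (Aᴴ - (t : ℂ) • 1)⁻¹)ᴴ * (θ₁ᴴ * (Aᴴ - (t : ℂ) • 1)⁻¹) := by
    simp [conjTranspose_nonsing_inv, Matrix.mul_assoc]
  simp only [hgram] at hint ⊢
  refine posDef_integral_conjTranspose_mul_self (continuous_const.matrix_mul
    (Aᴴ.continuousOn_inv_sub_smul_one.comp_continuous Complex.continuous_ofReal hAH)) hint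
    fun v hv => ?_
  by_contra! hW
  exact hv (hobs v Set.univ isOpen_univ Set.univ_nonempty fun t _ =>
    ⟨hAH t, by rw [mulVec_mulVec]; exact hW t⟩)
end
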